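/- arXiv:1802.00157 — 5 statements merged into one kernel-verified Lean document; each statement's English description precedes it below -/
import Mathlib

section
/- Every (n,k,r) locally recoverable code over a finite alphabet of size q satisfies d_min ≤ n - k - ⌈k/r⌉ + 2. -/
/-!
Let `t = ⌈k/r⌉ - 1`. Count the restrictions of codewords to a coordinate set `S`: adding a
coordinate multiplies their number by at most `q`, and adding a coordinate recoverable from
coordinates already in `S` does not increase it. Greedily adding a whole repair group `I ∪ {i}`
(with `i ∉ S`) therefore costs at most `r + 1` coordinates but only `r` factors of `q`, so after
`t` rounds some `S` carries at most `q ^ (#S - t)` restrictions. Padding `S` to `k - 1 + t`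
coordinates leaves at most `q ^ (k - 1) < #C` restrictions, so two distinct codewords agree on
`k - 1 + t` coordinates and `d ≤ n - (k - 1 + t)`.
-/

open Finset

namespace Finset

theorem card_image_le_card_image_of_factor {β γ δ : Type*} [DecidableEq γ] [DecidableEq δ]
    {s : Finset β} {f : β → γ} {g : β → δ} (h : ∀ a ∈ s, ∀ b ∈ s, f a = f b → g a = g b) :
    #(s.image g) ≤ #(s.image f) := by
  have hfst : Set.InjOn Prod.fst (s.image fun a => (f a, g a) : Set (γ × δ)) := by
    simp only [coe_image, Set.InjOn, Set.mem_image, mem_coe]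
    rintro _ ⟨a, ha, rfl⟩ _ ⟨b, hb, rfl⟩ hab
    simp only [Prod.mk.injEq] at hab ⊢
    exact ⟨hab, h a ha b hb hab⟩
  calc #(s.image g) = #((s.image fun a => (f a, g a)).image Prod.snd) := by rw [image_image]; rfl
    _ ≤ #(s.image fun a => (f a, g a)) := card_image_le
    _ = #((s.image fun a => (f a, g a)).image Prod.fst) := (card_image_of_injOn hfst).symm
    _ = #(s.image f) := by rw [image_image]; rfl

theorem restrict_eq_restrict_iff {ι : Type*} {π : ι → Type*} {S : Finset ι}
    {c c' : (i : ι) → π i} : S.restrict c = S.restrict c' ↔ ∀ j ∈ S, c j = c' j := by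
  simp [funext_iff]

end Finset

theorem hammingDist_add_card_le_of_agree {ι α : Type*} [Fintype ι] [DecidableEq α]
    {c c' : ι → α} {S : Finset ι} (h : ∀ j ∈ S, c j = c' j) :
    hammingDist c c' + #S ≤ Fintype.card ι := by
  classical
  have hsub : ({j | c j ≠ c' j} : Finset ι) ⊆ univ \ S := fun j hj => by
    simp only [mem_filter, mem_univ, true_and, mem_sdiff] at hj ⊢
    exact fun hjS => hj (h j hjS)
  calc hammingDist c c' + #S ≤ #(univ \ S) + #S := Nat.add_le_add_right (card_le_card hsub) _
    _ = Fintype.card ι := by rw [card_sdiff_add_card_eq_card (subset_univ S), card_univ]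

theorem Int.ceil_natCast_div_le {k r : ℕ} (hr : 0 < r) :
    ⌈(k : ℚ) / r⌉ ≤ (((k - 1) / r : ℕ) : ℤ) + 1 := by
  have hk : k ≤ ((k - 1) / r + 1) * r := by
    have := Nat.lt_mul_div_succ (k - 1) hr
    rw [mul_comm]; omega
  rw [Int.ceil_le, div_le_iff₀ (by exact_mod_cast hr)]
  exact_mod_cast hk

section Restriction

variable {ι α : Type*} [DecidableEq α] (C : Finset (ι → α))

def restrictCard (S : Finset ι) : ℕ := #(C.image S.restrict)

def IsRecoverableFrom (I : Finset ι) (i : ι) : Prop :=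
  ∀ c ∈ C, ∀ c' ∈ C, (∀ j ∈ I, c j = c' j) → c i = c' i

variable {C}

theorem restrictCard_univ [Fintype ι] : restrictCard C univ = #C :=
  card_image_of_injective _ fun _ _ h => funext fun j => restrict_eq_restrict_iff.1 h j (mem_univ j)

theorem exists_ne_of_restrictCard_lt {S : Finset ι} (h : restrictCard C S < #C) :
    ∃ c ∈ C, ∃ c' ∈ C, c ≠ c' ∧ ∀ j ∈ S, c j = c' j := by
  obtain ⟨c, hc, c', hc', hne, heq⟩ :=
    exists_ne_map_eq_of_card_lt_of_maps_to h fun c hc => mem_image_of_mem S.restrict hc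
  exact ⟨c, hc, c', hc', hne, restrict_eq_restrict_iff.1 heq⟩

variable [DecidableEq ι]

theorem restrictCard_insert_le [Fintype α] (S : Finset ι) (i : ι) :
    restrictCard C (insert i S) ≤ restrictCard C S * Fintype.card α := by
  calc restrictCard C (insert i S) ≤ #(C.image fun c => (S.restrict c, c i)) := by
        refine card_image_le_card_image_of_factor fun c _ c' _ h => ?_
        simp only [Prod.mk.injEq, restrict_eq_restrict_iff] at h ⊢
        simpa [h.2] using h.1
    _ ≤ #(C.image S.restrict ×ˢ (univ : Finset α)) :=
        card_le_card fun p hp => by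
          obtain ⟨c, hc, rfl⟩ := mem_image.1 hp
          exact mem_product.2 ⟨mem_image_of_mem _ hc, mem_univ _⟩
    _ = restrictCard C S * Fintype.card α := by rw [card_product, card_univ]; rfl

theorem restrictCard_union_le [Fintype α] (S A : Finset ι) :
    restrictCard C (S ∪ A) ≤ restrictCard C S * Fintype.card α ^ #A := by
  induction A using Finset.induction_on with
  | empty => simp
  | @insert a A ha ih =>
    rw [union_insert, card_insert_of_notMem ha, pow_succ, ← mul_assoc]
    exact (restrictCard_insert_le _ a).trans (Nat.mul_le_mul_right _ ih)

theorem restrictCard_insert_le_of_isRecoverableFrom {S I : Finset ι} {i : ι} (hI : I ⊆ S)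
    (hrec : IsRecoverableFrom C I i) : restrictCard C (insert i S) ≤ restrictCard C S := by
  refine card_image_le_card_image_of_factor fun c hc c' hc' h => ?_
  rw [restrict_eq_restrict_iff] at h ⊢
  intro j hj
  rcases mem_insert.1 hj with rfl | hj
  · exact hrec c hc c' hc' fun l hl => h l (hI hl)
  · exact h j hj

end Restriction

section Locality

variable {ι α : Type*} [DecidableEq ι] [Fintype α] [DecidableEq α] {C : Finset (ι → α)}

local notation "q" => Fintype.card α

theorem restrictCard_mul_pow_le_of_subset {S T : Finset ι} {j : ℕ} (hST : S ⊆ T)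
    (hS : restrictCard C S * q ^ j ≤ q ^ #S) : restrictCard C T * q ^ j ≤ q ^ #T := by
  calc restrictCard C T * q ^ j ≤ restrictCard C S * q ^ #(T \ S) * q ^ j := by
        gcongr
        simpa only [union_sdiff_of_subset hST] using restrictCard_union_le (C := C) S (T \ S)
    _ = restrictCard C S * q ^ j * q ^ #(T \ S) := by ring
    _ ≤ q ^ #S * q ^ #(T \ S) := by gcongr
    _ = q ^ #T := by rw [← pow_add, add_comm, card_sdiff_add_card_eq_card hST]

theorem restrictCard_insert_union_mul_pow_le {S I : Finset ι} {i : ι} {j : ℕ} (hiS : i ∉ S)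
    (hiI : i ∉ I) (hrec : IsRecoverableFrom C I i) (hS : restrictCard C S * q ^ j ≤ q ^ #S) :
    restrictCard C (insert i (S ∪ I)) * q ^ (j + 1) ≤ q ^ #(insert i (S ∪ I)) := by
  have hU := restrictCard_mul_pow_le_of_subset (T := S ∪ I) subset_union_left hS
  have hT := restrictCard_insert_le_of_isRecoverableFrom (subset_union_right (s₁ := S)) hrec
  rw [card_insert_of_notMem (by simp [hiS, hiI]), pow_succ, pow_succ, ← mul_assoc]
  gcongr
  exact (Nat.mul_le_mul_right _ hT).trans hU

theorem exists_restrictCard_mul_pow_le [Fintype ι] {k r : ℕ} (hq : 1 < q) (hcard : #C = q ^ k)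
    (hloc : ∀ i, ∃ I : Finset ι, i ∉ I ∧ #I ≤ r ∧ IsRecoverableFrom C I i) :
    ∀ j, j * r < k → ∃ S : Finset ι, #S ≤ j * (r + 1) ∧ restrictCard C S * q ^ j ≤ q ^ #S := by
  intro j
  induction j with
  | zero =>
    exact fun _ => ⟨∅, by simp, by simpa [restrictCard] using card_le_one_of_subsingleton _⟩
  | succ j ih =>
    intro hj
    obtain ⟨S, hSle, hS⟩ := ih (lt_of_le_of_lt (Nat.mul_le_mul_right r j.le_succ) hj)
    obtain ⟨i, hiS⟩ : ∃ i, i ∉ S := by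
      by_contra! hS_univ
      rw [eq_univ_of_forall hS_univ] at hS hSle
      rw [restrictCard_univ, hcard, ← pow_add, Nat.pow_le_pow_iff_right hq] at hS
      nlinarith
    obtain ⟨I, hiI, hIr, hrec⟩ := hloc i
    refine ⟨insert i (S ∪ I), ?_, restrictCard_insert_union_mul_pow_le hiS hiI hrec hS⟩
    calc #(insert i (S ∪ I)) ≤ #S + #I + 1 :=
          (card_insert_le _ _).trans (Nat.add_le_add_right (card_union_le _ _) _)
      _ ≤ (j + 1) * (r + 1) := by nlinarith

end Locality

/-- Singleton-type bound for LRC codes (Gopalan–Huang–Simitci–Yekhanin):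
every `(n,k,r)` LRC code satisfies `d_min ≤ n - k - ⌈k/r⌉ + 2`. -/
theorem lrc_singleton_bound
    {α : Type*} [Fintype α] [DecidableEq α] {n k r q : ℕ} (hk : 0 < k) (hr : 0 < r)
    (hq : Fintype.card α = q)
    (C : Finset (Fin n → α)) (hcard : C.card = q ^ k)
    (hloc : ∀ i : Fin n, ∃ I : Finset (Fin n), i ∉ I ∧ I.card = r ∧
      ∀ c ∈ C, ∀ c' ∈ C, (∀ j ∈ I, c j = c' j) → c i = c' i)
    (hC2 : 1 < C.card)
    (d : ℕ) (hd : ∀ c ∈ C, ∀ c' ∈ C, c ≠ c' → d ≤ hammingDist c c') :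
    (d : ℤ) ≤ (n : ℤ) - (k : ℤ) - ⌈(k : ℚ) / (r : ℚ)⌉ + 2 := by
  subst hq
  have hq1 : 1 < Fintype.card α := (one_lt_pow_iff hk.ne').1 (hcard ▸ hC2)
  set t := (k - 1) / r
  have htr : t * r ≤ k - 1 := Nat.div_mul_le_self _ _
  obtain ⟨S, hSle, hS⟩ := exists_restrictCard_mul_pow_le hq1 hcard
    (fun i => (hloc i).imp fun _ ⟨hiI, hIr, hrec⟩ => ⟨hiI, hIr.le, hrec⟩) t (by omega)
  obtain ⟨S', hSS', -, hS'card⟩ := exists_subsuperset_card_eq (subset_univ S)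
    (n := min (k - 1 + t) n) (le_min (by nlinarith) (by simpa using card_le_univ S))
    (by simp)
  have hlt : restrictCard C S' < #C := by
    have hS' := restrictCard_mul_pow_le_of_subset hSS' hS
    rw [hcard]
    refine Nat.lt_of_mul_lt_mul_right (hS'.trans_lt ?_)
    rw [← pow_add]
    exact Nat.pow_lt_pow_right hq1 (by omega)
  obtain ⟨c, hc, c', hc', hne, hagree⟩ := exists_ne_of_restrictCard_lt hlt
  have hdist := hammingDist_add_card_le_of_agree hagree
  have hpos := hammingDist_pos.2 hne
  have hdc := hd c hc c' hc' hne
  have hceil := Int.ceil_natCast_div_le (k := k) hr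
  rw [Fintype.card_fin] at hdist
  omega
end

section
/- Let C be an (n,k,r) LRC code such that s := n mod (r+1) satisfies s ∉ {0,1}, and suppose C has m := ⌊n/(r+1)⌋ + 1 pairwise disjoint repair groups A_1,...,A_m with |A_i| = r+1 for i < m and |A_m| = s (each A_i being a repair group means each coordinate in A_i is a function of the other coordinates of A_i restricted to codewords). If either r | k, or (r ∤ k and k mod r ≥ s), then d_min(C) ≤ n - k - ⌈k/r⌉ + 1. -/
/-!
Pick one coordinate in each repair group. Two codewords that agree on a union of groups with
the picked coordinates removed agree on the whole union, since each picked coordinate is repaired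
from the rest of its group. Applied to all groups this shows that `n - m` coordinates determine a
codeword, so `k + m ≤ n`. The hypothesis on `k mod r` lets us write `k = r a + s + b` with
`s + b ≤ r`, so that `⌈k/r⌉ = a + 1`; the last group, `a` groups of size `r + 1` and `b` further
coordinates of another group then form a set `S` of `k + a` coordinates containing only `a + 1`
picked ones. By pigeonhole two distinct codewords agree on the `k - 1` unpicked coordinates of
`S`, hence on `S`, so `d ≤ n - k - a = n - k - ⌈k/r⌉ + 1`.
-/

open Finset Function

section

variable {ι κ α : Type*} [DecidableEq ι]

def IsRepairGroup (C : Finset (ι → α)) (A : Finset ι) : Prop :=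
  ∀ i ∈ A, ∀ c ∈ C, ∀ c' ∈ C, (∀ l ∈ A, l ≠ i → c l = c' l) → c i = c' i

lemma exists_ne_eqOn_of_card_pow_lt [Fintype α] {C : Finset (ι → α)} {T : Finset ι}
    (h : Fintype.card α ^ #T < #C) : ∃ c ∈ C, ∃ c' ∈ C, c ≠ c' ∧ Set.EqOn c c' T := by
  obtain ⟨c, hc, c', hc', hne, hcc'⟩ :=
    exists_ne_map_eq_of_card_lt_of_maps_to (t := (univ : Finset (T → α)))
      (f := fun (c : ι → α) (i : T) => c i) (by simpa using h) (fun _ _ => mem_univ _)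
  exact ⟨c, hc, c', hc', hne, fun i hi => congrFun hcc' ⟨i, hi⟩⟩

lemma hammingDist_add_card_le_of_eqOn [Fintype ι] [DecidableEq α] {c c' : ι → α} {S : Finset ι}
    (h : Set.EqOn c c' S) : hammingDist c c' + #S ≤ Fintype.card ι := by
  have hsub : ({i | c i ≠ c' i} : Finset ι) ⊆ Sᶜ := fun i hi =>
    mem_compl.2 fun hiS => (mem_filter.1 hi).2 (h hiS)
  calc hammingDist c c' + #S ≤ #Sᶜ + #S := Nat.add_le_add_right (card_le_card hsub) _
    _ = Fintype.card ι := card_compl_add_card S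

section RepairGroups

variable {C : Finset (ι → α)} {A : κ → Finset ι} {J : Finset κ} {e : κ → ι}

lemma eqOn_of_eqOn_sdiff_image (hdisj : (J : Set κ).PairwiseDisjoint A)
    (hrep : ∀ j ∈ J, IsRepairGroup C (A j)) (he : ∀ j ∈ J, e j ∈ A j) {S : Finset ι}
    (hS : ∀ j ∈ J, A j ⊆ S) {c c' : ι → α} (hc : c ∈ C) (hc' : c' ∈ C)
    (h : Set.EqOn c c' ↑(S \ J.image e)) : Set.EqOn c c' S := by
  intro i hi
  by_cases hiP : i ∈ J.image e
  · obtain ⟨j, hj, rfl⟩ := mem_image.1 hiP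
    refine hrep j hj _ (he j hj) c hc c' hc' fun l hl hlne => h (mem_sdiff.2 ⟨hS j hj hl, ?_⟩)
    intro hlP
    obtain ⟨j', hj', rfl⟩ := mem_image.1 hlP
    have hjj' : j ≠ j' := fun hjj' => hlne (hjj' ▸ rfl)
    exact disjoint_left.1 (hdisj hj hj' hjj') hl (he j' hj')
  · exact h (mem_sdiff.2 ⟨hi, hiP⟩)

lemma exists_ne_hammingDist_add_card_le [Fintype ι] [Fintype α] [DecidableEq α]
    (hdisj : (J : Set κ).PairwiseDisjoint A) (hrep : ∀ j ∈ J, IsRepairGroup C (A j))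
    (he : ∀ j ∈ J, e j ∈ A j) {S : Finset ι} (hS : ∀ j ∈ J, A j ⊆ S)
    (hcard : Fintype.card α ^ (#S - #J) < #C) :
    ∃ c ∈ C, ∃ c' ∈ C, c ≠ c' ∧ hammingDist c c' + #S ≤ Fintype.card ι := by
  have hinj : Set.InjOn e J := fun j hj j' hj' hjj' => by
    by_contra hne
    exact disjoint_left.1 (hdisj hj hj' hne) (he j hj) (hjj' ▸ he j' hj')
  have hPS : J.image e ⊆ S := image_subset_iff.2 fun j hj => hS j hj (he j hj)
  rw [← card_image_of_injOn hinj, ← card_sdiff_of_subset hPS] at hcard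
  obtain ⟨c, hc, c', hc', hne, hagree⟩ := exists_ne_eqOn_of_card_pow_lt hcard
  exact ⟨c, hc, c', hc', hne, hammingDist_add_card_le_of_eqOn
    (eqOn_of_eqOn_sdiff_image hdisj hrep he hS hc hc' hagree)⟩

lemma card_le_pow_card_sub_of_repairGroups [Fintype ι] [Fintype κ] [Fintype α] [DecidableEq α]
    (hdisj : Pairwise (Disjoint on A)) (hrep : ∀ j, IsRepairGroup C (A j))
    (hne : ∀ j, (A j).Nonempty) : #C ≤ Fintype.card α ^ (Fintype.card ι - Fintype.card κ) := by
  choose e he using hne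
  by_contra! hlt
  obtain ⟨c, -, c', -, hcc', hdist⟩ := exists_ne_hammingDist_add_card_le (J := univ) (S := univ)
    (hdisj.set_pairwise _) (fun j _ => hrep j) (fun j _ => he j) (fun _ _ => subset_univ _)
    (by simpa using hlt)
  have := hammingDist_pos.2 hcc'
  simp only [card_univ] at hdist
  omega

end RepairGroups

lemma exists_groups_subset_card_eq {m r s a b : ℕ} {A : Fin m → Finset ι}
    (hdisj : Pairwise (Disjoint on A))
    (hAcard : ∀ i : Fin m, (i : ℕ) < m - 1 → #(A i) = r + 1)
    (hAlast : ∀ i : Fin m, (i : ℕ) = m - 1 → #(A i) = s) (ha : a + 1 < m) (hb : b ≤ r + 1) :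
    ∃ J : Finset (Fin m), ∃ S : Finset ι,
      (∀ j ∈ J, A j ⊆ S) ∧ #J = a + 1 ∧ #S = a * (r + 1) + s + b := by
  let last : Fin m := ⟨m - 1, by omega⟩
  let mid : Fin m := ⟨a, by omega⟩
  let J₀ : Finset (Fin m) := {j | (j : ℕ) < a}
  have hlast : last ∉ J₀ := by simp [J₀, last]; omega
  obtain ⟨B, hBmid, hB⟩ := exists_subset_card_eq (s := A mid) (n := b)
    (by rw [hAcard mid (by simp [mid]; omega)]; exact hb)
  have hdisjB : Disjoint ((insert last J₀).biUnion A) B := by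
    refine (disjoint_biUnion_left _ _ _).2 fun j hj => (hdisj fun hjm => ?_).mono_right hBmid
    subst hjm
    simp [J₀, last, mid] at hj
    omega
  refine ⟨insert last J₀, (insert last J₀).biUnion A ∪ B,
    fun j hj => subset_union_left.trans' (subset_biUnion_of_mem A hj), ?_, ?_⟩
  · rw [card_insert_of_notMem hlast, Fin.card_filter_val_lt]
    omega
  · rw [card_union_of_disjoint hdisjB, card_biUnion fun j _ j' _ hjj' => hdisj hjj',
      sum_insert hlast, hAlast last rfl,
      sum_congr rfl fun j hj => hAcard j (by simp [J₀] at hj; omega),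
      sum_const, Fin.card_filter_val_lt, smul_eq_mul, hB]
    rw [min_eq_right (by omega)]
    ring

end

lemma exists_eq_mul_add_add_of_dvd_or_le_mod {k r s : ℕ} (hk : 0 < k) (hr : 0 < r) (hsr : s ≤ r)
    (hcase : r ∣ k ∨ (¬ r ∣ k ∧ s ≤ k % r)) : ∃ a b, k = r * a + s + b ∧ s + b ≤ r := by
  rcases hcase with ⟨c, rfl⟩ | ⟨-, hsk⟩
  · obtain ⟨a, rfl⟩ : ∃ a, c = a + 1 := Nat.exists_eq_add_one.2 (Nat.pos_of_mul_pos_left hk)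
    exact ⟨a, r - s, by rw [Nat.mul_succ]; omega, by omega⟩
  · exact ⟨k / r, k % r - s, by rw [add_assoc, Nat.add_sub_cancel' hsk, Nat.div_add_mod],
      by have := Nat.mod_lt k hr; omega⟩

lemma ceil_natCast_div_eq_add_one {k r a : ℕ} (h₁ : r * a < k) (h₂ : k ≤ r * a + r) :
    ⌈(k : ℚ) / r⌉ = a + 1 := by
  have hr : (0 : ℚ) < r := by exact_mod_cast (show 0 < r by omega)
  rw [Int.ceil_eq_iff, lt_div_iff₀ hr, div_le_iff₀ hr]
  push_cast
  constructor
  · rw [add_sub_cancel_right, mul_comm]; exact_mod_cast h₁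
  · rw [add_one_mul, mul_comm]; exact_mod_cast h₂

theorem lrc_strengthened_singleton_bound_general
    {α : Type*} [Fintype α] [DecidableEq α] {n k r q s m : ℕ} (hk : 0 < k)
    (hq : Fintype.card α = q)
    (hs : s = n % (r + 1)) (hs2 : 2 ≤ s) (hm : m = n / (r + 1) + 1)
    (C : Finset (Fin n → α)) (hcard : C.card = q ^ k)
    (A : Fin m → Finset (Fin n))
    (hdisj : ∀ i j : Fin m, i ≠ j → Disjoint (A i) (A j))
    (hAcard : ∀ i : Fin m, (i : ℕ) < m - 1 → (A i).card = r + 1)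
    (hAlast : ∀ i : Fin m, (i : ℕ) = m - 1 → (A i).card = s)
    (hrepair : ∀ j : Fin m, ∀ i ∈ A j, ∀ c ∈ C, ∀ c' ∈ C,
      (∀ l ∈ A j, l ≠ i → c l = c' l) → c i = c' i)
    (hcase : r ∣ k ∨ (¬ r ∣ k ∧ s ≤ k % r))
    (hC2 : 1 < C.card)
    (d : ℕ) (hd : ∀ c ∈ C, ∀ c' ∈ C, c ≠ c' → d ≤ hammingDist c c') :
    (d : ℤ) ≤ (n : ℤ) - (k : ℤ) - ⌈(k : ℚ) / (r : ℚ)⌉ + 1 := by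
  have hq2 : 1 < q := (one_lt_pow_iff hk.ne').1 (hcard ▸ hC2)
  have hsr : s ≤ r := hs ▸ Nat.lt_succ_iff.1 (Nat.mod_lt n r.succ_pos)
  have hn : n = (r + 1) * (m - 1) + s := by
    rw [hs, hm, Nat.add_sub_cancel, Nat.div_add_mod]
  have hm1 : 0 < m := hm ▸ Nat.succ_pos _
  have hdisj : Pairwise (Disjoint on A) := hdisj
  have hAne : ∀ j, (A j).Nonempty := fun j => card_pos.1 <| by
    by_cases hj : (j : ℕ) < m - 1
    · rw [hAcard j hj]; omega
    · rw [hAlast j (by omega)]; omega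
  have hkm : k + m ≤ n := by
    have hC := card_le_pow_card_sub_of_repairGroups hdisj hrepair hAne
    rw [hcard, Fintype.card_fin, Fintype.card_fin, hq, Nat.pow_le_pow_iff_right hq2] at hC
    omega
  choose e he using hAne
  obtain ⟨a, b, hkab, hsb⟩ := exists_eq_mul_add_add_of_dvd_or_le_mod hk (by omega) hsr hcase
  have ha : a + 1 < m := by
    have : r * a < r * (m - 1) := by rw [add_one_mul] at hn; omega
    have := Nat.lt_of_mul_lt_mul_left this; omega
  obtain ⟨J, S, hJS, hJ, hS⟩ := exists_groups_subset_card_eq hdisj hAcard hAlast ha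
    (show b ≤ r + 1 by omega)
  have hSk : #S = k + a := by rw [hS, hkab]; ring
  obtain ⟨c, hc, c', hc', hne, hdist⟩ := exists_ne_hammingDist_add_card_le
    (hdisj.set_pairwise _) (fun j _ => hrepair j) (fun j _ => he j) hJS
    (by rw [hSk, hJ, hq, hcard]; exact Nat.pow_lt_pow_right hq2 (by omega))
  rw [ceil_natCast_div_eq_add_one (a := a) (by omega) (by omega)]
  have := hd c hc c' hc' hne
  rw [Fintype.card_fin] at hdist
  omega

/-- Strengthened Singleton-type bound: if an `(n,k,r)` LRC code with
`s = n mod (r+1) ∉ {0,1}` has `m = ⌊n/(r+1)⌋ + 1` pairwise disjoint repair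
groups, the first `m-1` of size `r+1` and the last of size `s`, and either
`r ∣ k` or (`r ∤ k` and `k mod r ≥ s`), then `d_min ≤ n - k - ⌈k/r⌉ + 1`. -/
theorem lrc_strengthened_singleton_bound
    {α : Type*} [Fintype α] [DecidableEq α] {n k r q s m : ℕ} (hk : 0 < k) (hr : 0 < r)
    (hq : Fintype.card α = q)
    (hs : s = n % (r + 1)) (hs2 : 2 ≤ s) (hm : m = n / (r + 1) + 1)
    (C : Finset (Fin n → α)) (hcard : C.card = q ^ k)
    (hloc : ∀ i : Fin n, ∃ I : Finset (Fin n), i ∉ I ∧ I.card = r ∧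
      ∀ c ∈ C, ∀ c' ∈ C, (∀ j ∈ I, c j = c' j) → c i = c' i)
    (A : Fin m → Finset (Fin n))
    (hdisj : ∀ i j : Fin m, i ≠ j → Disjoint (A i) (A j))
    (hAcard : ∀ i : Fin m, (i : ℕ) < m - 1 → (A i).card = r + 1)
    (hAlast : ∀ i : Fin m, (i : ℕ) = m - 1 → (A i).card = s)
    (hrepair : ∀ j : Fin m, ∀ i ∈ A j, ∀ c ∈ C, ∀ c' ∈ C,
      (∀ l ∈ A j, l ≠ i → c l = c' l) → c i = c' i)
    (hcase : r ∣ k ∨ (¬ r ∣ k ∧ s ≤ k % r))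
    (hC2 : 1 < C.card)
    (d : ℕ) (hd : ∀ c ∈ C, ∀ c' ∈ C, c ≠ c' → d ≤ hammingDist c c') :
    (d : ℤ) ≤ (n : ℤ) - (k : ℤ) - ⌈(k : ℚ) / (r : ℚ)⌉ + 1 :=
  lrc_strengthened_singleton_bound_general hk hq hs hs2 hm C hcard A hdisj hAcard hAlast hrepair
    hcase hC2 d hd
end

section
/- Let F be a field, g ∈ F[x] a polynomial that is constant on each block of a partition A_1 ∪ ... ∪ A_m of a set Ā ⊆ F, with |A_j| = r+1 for all j, and suppose deg g = r+1. Let f(x) = Σ_{i=0}^{r-1} f_i(x)·x^i where each f_i is a polynomial in g (i.e., f_i(x) = F_i(g(x)) for some F_i ∈ F[x]). Then for each block A_j, the restriction of f to A_j agrees with a polynomial of degree at most r-1; consequently, for any α ∈ A_j, f(α) is determined by the values {f(β) : β ∈ A_j, β ≠ α} via polynomial interpolation. -/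
/-!
On a block where `g` takes the constant value `c`, each summand `F_i(g(x)) x^i` agrees with
`F_i(c) x^i`, so `f` agrees there with a polynomial of degree `< r`. Two polynomials of degree
`< r` that agree at `r` points of the block are equal, hence `f` at the remaining point is
determined by its values at the others.
-/

open Polynomial Finset

section

variable {R : Type*} {r : ℕ}

noncomputable def tamoBargPoly [CommSemiring R] (Fc : Fin r → R[X]) (g : R[X]) : R[X] :=
  ∑ i : Fin r, (Fc i).comp g * X ^ (i : ℕ)

noncomputable def tamoBargPolyAt [CommSemiring R] (Fc : Fin r → R[X]) (c : R) : R[X] :=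
  ∑ i : Fin r, C ((Fc i).eval c) * X ^ (i : ℕ)

theorem degree_tamoBargPolyAt_lt [CommSemiring R] (Fc : Fin r → R[X]) (c : R) :
    (tamoBargPolyAt Fc c).degree < r :=
  degree_sum_fin_lt _

theorem eval_tamoBargPoly_of_eval_eq [CommSemiring R] (Fc : Fin r → R[X]) {g : R[X]} {a c : R}
    (hc : g.eval a = c) : (tamoBargPoly Fc g).eval a = (tamoBargPolyAt Fc c).eval a := by
  simp [tamoBargPoly, tamoBargPolyAt, eval_finsetSum, hc]

theorem tamoBargPolyAt_eq_of_eval_eq_on_erase [CommRing R] [IsDomain R] {Fc Fc' : Fin r → R[X]}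
    {g : R[X]} {s : Finset R} (hs : s.card = r + 1) {α : R} (hα : α ∈ s)
    (hg : ∀ β ∈ s, g.eval β = g.eval α)
    (hagree : ∀ β ∈ s, β ≠ α → (tamoBargPoly Fc g).eval β = (tamoBargPoly Fc' g).eval β) :
    tamoBargPolyAt Fc (g.eval α) = tamoBargPolyAt Fc' (g.eval α) := by
  classical
  have hcard : ((s.erase α).card : WithBot ℕ) = r := by
    rw [card_erase_of_mem hα, hs, Nat.add_sub_cancel]
  refine eq_of_degrees_lt_of_eval_finset_eq (s.erase α)
    (hcard ▸ degree_tamoBargPolyAt_lt _ _) (hcard ▸ degree_tamoBargPolyAt_lt _ _) fun β hβ => ?_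
  obtain ⟨hβα, hβs⟩ := mem_erase.mp hβ
  rw [← eval_tamoBargPoly_of_eval_eq Fc (hg β hβs), ← eval_tamoBargPoly_of_eval_eq Fc' (hg β hβs)]
  exact hagree β hβs hβα

theorem eval_tamoBargPoly_eq_of_eval_eq_on_erase [CommRing R] [IsDomain R]
    {Fc Fc' : Fin r → R[X]} {g : R[X]} {s : Finset R} (hs : s.card = r + 1) {α : R} (hα : α ∈ s)
    (hg : ∀ β ∈ s, g.eval β = g.eval α)
    (hagree : ∀ β ∈ s, β ≠ α → (tamoBargPoly Fc g).eval β = (tamoBargPoly Fc' g).eval β) :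
    (tamoBargPoly Fc g).eval α = (tamoBargPoly Fc' g).eval α := by
  rw [eval_tamoBargPoly_of_eval_eq Fc rfl, eval_tamoBargPoly_of_eval_eq Fc' rfl,
    tamoBargPolyAt_eq_of_eval_eq_on_erase hs hα hg hagree]

end

theorem tamo_barg_locality_general
    {F : Type*} [Field F] {m r : ℕ}
    (A : Fin m → Finset F)
    (hAcard : ∀ j, (A j).card = r + 1)
    (g : Polynomial F)
    (hgconst : ∀ j : Fin m, ∀ a ∈ A j, ∀ b ∈ A j, g.eval a = g.eval b)
    (Fc : Fin r → Polynomial F)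
    (f : Polynomial F) (hf : f = ∑ i : Fin r, (Fc i).comp g * X ^ (i : ℕ)) :
    (∀ j : Fin m, ∃ p : Polynomial F, p.degree < (r : ℕ) ∧
      ∀ a ∈ A j, f.eval a = p.eval a) ∧
    (∀ Fc' : Fin r → Polynomial F,
      ∀ f' : Polynomial F, f' = ∑ i : Fin r, (Fc' i).comp g * X ^ (i : ℕ) →
      ∀ j : Fin m, ∀ α ∈ A j,
        (∀ β ∈ A j, β ≠ α → f.eval β = f'.eval β) → f.eval α = f'.eval α) := by
  subst hf
  refine ⟨fun j => ?_, fun Fc' f' hf' j α hα hagree => ?_⟩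
  · obtain ⟨a₀, ha₀⟩ : (A j).Nonempty := card_pos.mp (by rw [hAcard j]; exact r.succ_pos)
    exact ⟨tamoBargPolyAt Fc (g.eval a₀), degree_tamoBargPolyAt_lt _ _,
      fun a ha => eval_tamoBargPoly_of_eval_eq Fc (hgconst j a ha a₀ ha₀)⟩
  · subst hf'
    exact eval_tamoBargPoly_eq_of_eval_eq_on_erase (hAcard j) hα
      (fun β hβ => hgconst j β hβ α hα) hagree

/-- Locality of Tamo–Barg codes: if `g` is constant on each block `A j` of size
`r+1` and `f = Σ_{i<r} Fc i (g x) · x^i`, then on each block `f` agrees with a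
polynomial of degree `< r`; consequently the value of such an `f` at any point
of a block is determined by its values at the other `r` points of the block. -/
theorem tamo_barg_locality
    {F : Type*} [Field F] {m r : ℕ} (hr : 0 < r)
    (A : Fin m → Finset F)
    (hdisj : ∀ i j : Fin m, i ≠ j → Disjoint (A i) (A j))
    (hAcard : ∀ j, (A j).card = r + 1)
    (g : Polynomial F) (hgdeg : g.degree = (r + 1 : ℕ))
    (hgconst : ∀ j : Fin m, ∀ a ∈ A j, ∀ b ∈ A j, g.eval a = g.eval b)
    (Fc : Fin r → Polynomial F)
    (f : Polynomial F) (hf : f = ∑ i : Fin r, (Fc i).comp g * X ^ (i : ℕ)) :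
    (∀ j : Fin m, ∃ p : Polynomial F, p.degree < (r : ℕ) ∧
      ∀ a ∈ A j, f.eval a = p.eval a) ∧
    (∀ Fc' : Fin r → Polynomial F,
      ∀ f' : Polynomial F, f' = ∑ i : Fin r, (Fc' i).comp g * X ^ (i : ℕ) →
      ∀ j : Fin m, ∀ α ∈ A j,
        (∀ β ∈ A j, β ≠ α → f.eval β = f'.eval β) → f.eval α = f'.eval α) :=
  tamo_barg_locality_general A hAcard g hgconst Fc f hf
end

section
/- Every (n,k,r) LRC code satisfies k ≤ n - ⌈n/(r+1)⌉. -/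
/-- Greedy covering: for any set `U` of coordinates, there is a list `L` of
coordinates in `U` covering `U` efficiently, such that later elements of `L`
do not lie in the repair sets of earlier elements. -/
lemma lrc_greedy {n r : ℕ} (I : Fin n → Finset (Fin n))
    (hIcard : ∀ i, (I i).card ≤ r) :
    ∀ U : Finset (Fin n), ∃ L : List (Fin n),
      L.toFinset ⊆ U ∧ U.card ≤ (r + 1) * L.length ∧
      L.Pairwise (fun a b => b ∉ I a ∧ a ≠ b) := by
  intro U
  induction U using Finset.strongInduction with
  | _ U ih =>
    rcases U.eq_empty_or_nonempty with h | ⟨i, hi⟩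
    · exact ⟨[], by simp [h]⟩
    · set U' := U \ insert i (I i) with hU'
      have hss : U' ⊂ U := by
        refine Finset.ssubset_iff_of_subset (Finset.sdiff_subset) |>.mpr ⟨i, hi, ?_⟩
        simp [hU']
      obtain ⟨L', h1, h2, h3⟩ := ih U' hss
      refine ⟨i :: L', ?_, ?_, ?_⟩
      · intro x hx
        simp only [List.toFinset_cons, Finset.mem_insert] at hx
        rcases hx with rfl | hx
        · exact hi
        · exact (Finset.sdiff_subset) (h1 hx)
      · have hcov : U ⊆ U' ∪ insert i (I i) := by
          intro x hx
          by_cases hx' : x ∈ insert i (I i)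
          · exact Finset.mem_union_right _ hx'
          · exact Finset.mem_union_left _ (Finset.mem_sdiff.mpr ⟨hx, hx'⟩)
        have h4 : U.card ≤ U'.card + (insert i (I i)).card :=
          le_trans (Finset.card_le_card hcov) (Finset.card_union_le _ _)
        have h5 : (insert i (I i)).card ≤ r + 1 :=
          le_trans (Finset.card_insert_le _ _) (by have := hIcard i; omega)
        simp only [List.length_cons]
        calc U.card ≤ U'.card + (r + 1) := by omega
          _ ≤ (r + 1) * L'.length + (r + 1) := by omega
          _ = (r + 1) * (L'.length + 1) := by ring
      · refine List.pairwise_cons.mpr ⟨?_, h3⟩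
        intro b hb
        have hb' : b ∈ U' := h1 (List.mem_toFinset.mpr hb)
        simp only [hU', Finset.mem_sdiff, Finset.mem_insert] at hb'
        exact ⟨fun h => hb'.2 (Or.inr h), fun h => hb'.2 (Or.inl h.symm)⟩

/-- Recovery: if two words satisfy all local recovery rules, agree outside
`L.toFinset`, and `L` has the chain property, then they agree everywhere. -/
lemma lrc_recover {n : ℕ} {α : Type*} (I : Fin n → Finset (Fin n))
    (hni : ∀ i, i ∉ I i) (c c' : Fin n → α)
    (hrec : ∀ i, (∀ j ∈ I i, c j = c' j) → c i = c' i) :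
    ∀ L : List (Fin n), L.Pairwise (fun a b => b ∉ I a ∧ a ≠ b) →
      (∀ j, j ∉ L.toFinset → c j = c' j) → ∀ j, c j = c' j := by
  intro L
  induction L with
  | nil => intro _ h j; exact h j (by simp)
  | cons i L' ihL =>
    intro hp hout j
    obtain ⟨hhead, htail⟩ := List.pairwise_cons.mp hp
    have hci : c i = c' i := by
      apply hrec i
      intro x hx
      apply hout
      simp only [List.toFinset_cons, Finset.mem_insert, List.mem_toFinset]
      push_neg
      refine ⟨fun h => hni i (h ▸ hx), fun h => (hhead x h).1 hx⟩
    apply ihL htail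
    intro x hx
    by_cases hxi : x = i
    · exact hxi ▸ hci
    · apply hout
      simp only [List.toFinset_cons, Finset.mem_insert]
      push_neg
      exact ⟨hxi, hx⟩

/-- Dimension bound for LRC codes (Tamo–Barg, Thm. 2.1):
every `(n,k,r)` LRC code satisfies `k ≤ n - ⌈n/(r+1)⌉`. -/
theorem lrc_dimension_bound
    {α : Type*} [Fintype α] {n k r q : ℕ} (hk : 0 < k) (hr : 0 < r)
    (hq : Fintype.card α = q)
    (C : Finset (Fin n → α)) (hcard : C.card = q ^ k) (hC2 : 1 < C.card)
    (hloc : ∀ i : Fin n, ∃ I : Finset (Fin n), i ∉ I ∧ I.card = r ∧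
      ∀ c ∈ C, ∀ c' ∈ C, (∀ j ∈ I, c j = c' j) → c i = c' i) :
    (k : ℤ) ≤ (n : ℤ) - ⌈(n : ℚ) / ((r : ℚ) + 1)⌉ := by
  classical
  choose I hni hIcard hrec using hloc
  -- q ≥ 2
  have hq2 : 2 ≤ q := by
    by_contra h
    push_neg at h
    interval_cases q <;> simp_all
  -- greedy covering of all coordinates
  obtain ⟨L, hLsub, hLcard, hLpair⟩ :=
    lrc_greedy I (fun i => le_of_eq (hIcard i)) Finset.univ
  set T : Finset (Fin n) := L.toFinset with hT
  have hnodup : L.Nodup := List.Pairwise.imp (fun h => h.2) hLpair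
  have hTcard : T.card = L.length := List.toFinset_card_of_nodup hnodup
  have hcover : n ≤ (r + 1) * L.length := by
    simpa using hLcard
  -- injectivity of puncturing on T
  have hinj : ∀ c ∈ C, ∀ c' ∈ C,
      (∀ j : Fin n, j ∉ T → c j = c' j) → c = c' := by
    intro c hc c' hc' hagree
    funext j
    exact lrc_recover I hni c c'
      (fun i h => hrec i c hc c' hc' h) L hLpair hagree j
  -- counting
  have hcount : C.card ≤ q ^ (n - T.card) := by
    have hmap : ∀ c ∈ C,
        (fun j : {j : Fin n // j ∉ T} => c j.1) ∈
          (Finset.univ : Finset ({j : Fin n // j ∉ T} → α)) := fun _ _ =>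
      Finset.mem_univ _
    have hinj' : Set.InjOn (fun c : Fin n → α =>
        (fun j : {j : Fin n // j ∉ T} => c j.1)) C := by
      intro c hc c' hc' h
      apply hinj c hc c' hc'
      intro j hj
      exact congrFun h ⟨j, hj⟩
    have := Finset.card_le_card_of_injOn _ hmap hinj'
    calc C.card ≤ (Finset.univ : Finset ({j : Fin n // j ∉ T} → α)).card := this
      _ = q ^ (n - T.card) := by
        rw [Finset.card_univ, Fintype.card_fun, hq]
        congr 1
        rw [Fintype.card_subtype_compl]
        simp [Fintype.card_coe]
  -- k ≤ n - |T|
  have hkn : k ≤ n - T.card := by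
    rw [hcard] at hcount
    exact (Nat.pow_le_pow_iff_right hq2).mp hcount
  have hTn : T.card ≤ n := by
    simpa using Finset.card_le_card (Finset.subset_univ T)
  have hkm : k + T.card ≤ n := by omega
  -- ceiling bound
  have hceil : ⌈(n : ℚ) / ((r : ℚ) + 1)⌉ ≤ (T.card : ℤ) := by
    rw [Int.ceil_le]
    rw [div_le_iff₀ (by positivity)]
    push_cast
    rw [hTcard]
    rw [mul_comm] at hcover
    exact_mod_cast hcover
  have hkm' : (k : ℤ) + (T.card : ℤ) ≤ (n : ℤ) := by exact_mod_cast hkm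
  omega
end

section
/- Let n, k, r be positive integers, s = n mod (r+1) with s ≥ 2, t = r+1-s. Suppose d₁ = n - k - ⌈k/r⌉ + 2 (the Singleton-type bound) and d₂ = n - k - ⌈(k+t)/r⌉ + 2 (the achieved distance). Then d₁ - d₂ ∈ {0, 1}, and d₁ - d₂ = 1 exactly when r | k or (r ∤ k and k mod r ≥ s); in the latter case d₂ = n - k - ⌈k/r⌉ + 1, which matches the strengthened upper bound. -/
lemma ceil_div_eq_of (a b c : ℤ) (hb : 0 < b) (h1 : (c - 1) * b < a) (h2 : a ≤ c * b) :
    ⌈(a : ℚ) / (b : ℚ)⌉ = c := by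
  have hbq : (0 : ℚ) < (b : ℚ) := by exact_mod_cast hb
  rw [Int.ceil_eq_iff]
  constructor
  · rw [lt_div_iff₀ hbq]
    have : ((c - 1 : ℤ) : ℚ) * (b : ℚ) < (a : ℚ) := by exact_mod_cast h1
    push_cast at this ⊢
    linarith
  · rw [div_le_iff₀ hbq]
    exact_mod_cast h2

/-- The achieved distance `d₂ = n - k - ⌈(k+t)/r⌉ + 2` differs from the
Singleton-type bound `d₁ = n - k - ⌈k/r⌉ + 2` by 0 or 1; the gap is 1 exactly
when `r ∣ k` or (`r ∤ k` and `k mod r ≥ s`), in which case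
`d₂ = n - k - ⌈k/r⌉ + 1`. -/
theorem optimality_cases (n k r s t d₁ d₂ : ℤ) (hn : 0 < n) (hk : 0 < k) (hr : 0 < r)
    (hs : s = n % (r + 1)) (hs2 : 2 ≤ s) (ht : t = r + 1 - s)
    (hd₁ : d₁ = n - k - ⌈(k : ℚ) / (r : ℚ)⌉ + 2)
    (hd₂ : d₂ = n - k - ⌈((k : ℚ) + (t : ℚ)) / (r : ℚ)⌉ + 2) :
    (d₁ - d₂ = 0 ∨ d₁ - d₂ = 1) ∧
    (d₁ - d₂ = 1 ↔ (r ∣ k ∨ (¬ r ∣ k ∧ s ≤ k % r))) ∧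
    ((r ∣ k ∨ (¬ r ∣ k ∧ s ≤ k % r)) → d₂ = n - k - ⌈(k : ℚ) / (r : ℚ)⌉ + 1) := by
  set q := k / r with hq
  set m := k % r with hm
  have hkd : r * q + m = k := Int.mul_ediv_add_emod k r
  have hm0 : 0 ≤ m := Int.emod_nonneg k (by omega)
  have hmr : m < r := Int.emod_lt_of_pos k hr
  have hsr : s < r + 1 := by rw [hs]; exact Int.emod_lt_of_pos n (by omega)
  have ht1 : 1 ≤ t := by omega
  have htr : t ≤ r - 1 := by omega
  have hcast : ((k : ℚ) + (t : ℚ)) = ((k + t : ℤ) : ℚ) := by push_cast; ring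
  have hdvd : r ∣ k ↔ m = 0 := by
    constructor
    · intro h; exact Int.emod_eq_zero_of_dvd h
    · intro h; exact Int.dvd_of_emod_eq_zero h
  rcases eq_or_lt_of_le hm0 with hme | hmp
  · -- m = 0
    have hc1 : ⌈(k : ℚ) / (r : ℚ)⌉ = q := ceil_div_eq_of k r q hr (by nlinarith) (by nlinarith)
    have hc2 : ⌈((k : ℚ) + (t : ℚ)) / (r : ℚ)⌉ = q + 1 := by
      rw [hcast]; exact ceil_div_eq_of (k + t) r (q + 1) hr (by nlinarith) (by nlinarith)
    rw [hc1] at hd₁; rw [hc2] at hd₂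
    refine ⟨Or.inr (by omega), ⟨fun _ => Or.inl (hdvd.mpr hme.symm), fun _ => by omega⟩,
      fun _ => by rw [hc1]; omega⟩
  · -- m ≥ 1
    have hc1 : ⌈(k : ℚ) / (r : ℚ)⌉ = q + 1 :=
      ceil_div_eq_of k r (q + 1) hr (by nlinarith) (by nlinarith)
    have hnd : ¬ r ∣ k := by rw [hdvd]; omega
    rcases lt_or_ge m s with hms | hms
    · -- m < s : gap 0
      have hc2 : ⌈((k : ℚ) + (t : ℚ)) / (r : ℚ)⌉ = q + 1 := by
        rw [hcast]; exact ceil_div_eq_of (k + t) r (q + 1) hr (by nlinarith) (by nlinarith)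
      rw [hc1] at hd₁; rw [hc2] at hd₂
      refine ⟨Or.inl (by omega), ⟨fun h => absurd h (by omega),
        fun h => by rcases h with h | ⟨_, h⟩ <;> omega⟩, fun h => ?_⟩
      rcases h with h | ⟨_, h⟩
      · exact absurd h hnd
      · omega
    · -- m ≥ s : gap 1
      have hc2 : ⌈((k : ℚ) + (t : ℚ)) / (r : ℚ)⌉ = q + 2 := by
        rw [hcast]; exact ceil_div_eq_of (k + t) r (q + 2) hr (by nlinarith) (by nlinarith)
      rw [hc1] at hd₁; rw [hc2] at hd₂
      exact ⟨Or.inr (by omega), ⟨fun _ => Or.inr ⟨hnd, hms⟩, fun _ => by omega⟩,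
        fun _ => by rw [hc1]; omega⟩
end
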